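/- For θ ∈ ℝ define, for each integer g ≥ 1, γ_g(θ) = min(4θ − 2, ((8g − 4)θ − (4g − 3))/(4g − 1), (24gθ − (12g + 1))/(4g − 1)), and set γ(θ) = sup_{g ≥ 1} γ_g(θ). Then: (i) for 0.52 ≤ θ < 25/48, γ(θ) = γ_6(θ) = 4θ − 2; (ii) for 25/48 ≤ θ < 251/481, γ(θ) = γ_6(θ) = (44θ − 21)/23; (iii) for 251/481 ≤ θ < 23/44, γ(θ) = γ_5(θ) = (120θ − 61)/19; (iv) for 23/44 ≤ θ < 0.525, γ(θ) = γ_5(θ) = 4θ − 2. -/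
import Mathlib


/-- `gammaG g θ = min(4θ − 2, ((8g − 4)θ − (4g − 3))/(4g − 1), (24gθ − (12g + 1))/(4g − 1))`. -/
noncomputable def gammaG (g : ℕ) (θ : ℝ) : ℝ :=
  min (4 * θ - 2)
    (min (((8 * (g : ℝ) - 4) * θ - (4 * (g : ℝ) - 3)) / (4 * (g : ℝ) - 1))
      ((24 * (g : ℝ) * θ - (12 * (g : ℝ) + 1)) / (4 * (g : ℝ) - 1)))

/-- `gammaSup θ` is the supremum of `gammaG g θ` over integers `g ≥ 1`. -/
noncomputable def gammaSup (θ : ℝ) : ℝ :=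
  ⨆ g : {g : ℕ // 1 ≤ g}, gammaG (g : ℕ) θ

lemma gammaSup_eq_of_max (θ : ℝ) (g₀ : ℕ) (hg₀ : 1 ≤ g₀)
    (h : ∀ g : ℕ, 1 ≤ g → gammaG g θ ≤ gammaG g₀ θ) : gammaSup θ = gammaG g₀ θ := by
  apply le_antisymm
  · exact ciSup_le fun ⟨g, hg⟩ => h g hg
  · exact le_ciSup (f := fun g : {g : ℕ // 1 ≤ g} => gammaG (g : ℕ) θ)
      ⟨gammaG g₀ θ, by rintro x ⟨⟨g, hg⟩, rfl⟩; exact h g hg⟩ ⟨g₀, hg₀⟩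

lemma gammaG_le_B (g : ℕ) (θ : ℝ) :
    gammaG g θ ≤ ((8 * (g : ℝ) - 4) * θ - (4 * (g : ℝ) - 3)) / (4 * (g : ℝ) - 1) :=
  (min_le_right _ _).trans (min_le_left _ _)

lemma gammaG_le_C (g : ℕ) (θ : ℝ) :
    gammaG g θ ≤ (24 * (g : ℝ) * θ - (12 * (g : ℝ) + 1)) / (4 * (g : ℝ) - 1) :=
  (min_le_right _ _).trans (min_le_right _ _)

theorem gammaSup_piecewise (θ : ℝ) :
    (0.52 ≤ θ → θ < 25 / 48 → gammaSup θ = gammaG 6 θ ∧ gammaG 6 θ = 4 * θ - 2) ∧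
    (25 / 48 ≤ θ → θ < 251 / 481 →
      gammaSup θ = gammaG 6 θ ∧ gammaG 6 θ = (44 * θ - 21) / 23) ∧
    (251 / 481 ≤ θ → θ < 23 / 44 →
      gammaSup θ = gammaG 5 θ ∧ gammaG 5 θ = (120 * θ - 61) / 19) ∧
    (23 / 44 ≤ θ → θ < 0.525 → gammaSup θ = gammaG 5 θ ∧ gammaG 5 θ = 4 * θ - 2) := by
  refine ⟨?_, ?_, ?_, ?_⟩
  · -- case (i)
    intro h1 h2
    have hval : gammaG 6 θ = 4 * θ - 2 := by
      unfold gammaG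
      push_cast
      norm_num
      norm_num at h1
      constructor <;>
        · rw [← sub_le_iff_le_add, le_div_iff₀ (by norm_num : (0:ℝ) < 23)]
          linarith
    refine ⟨?_, hval⟩
    apply gammaSup_eq_of_max θ 6 (by norm_num)
    intro g hg
    rw [hval]
    exact min_le_left _ _
  · -- case (ii)
    intro h1 h2
    have hval : gammaG 6 θ = (44 * θ - 21) / 23 := by
      unfold gammaG
      push_cast
      norm_num
      rw [min_eq_left (by rw [div_le_div_iff₀ (by norm_num : (0:ℝ) < 23) (by norm_num : (0:ℝ) < 23)]; linarith : (44 * θ - 21) / 23 ≤ (144 * θ - 73) / 23),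
        min_eq_right (by rw [div_le_iff₀ (by norm_num : (0:ℝ) < 23)]; linarith)]
    refine ⟨?_, hval⟩
    apply gammaSup_eq_of_max θ 6 (by norm_num)
    intro g hg
    rw [hval]
    have hg' : (1:ℝ) ≤ (g:ℝ) := by exact_mod_cast hg
    have hd : (0:ℝ) < 4 * (g:ℝ) - 1 := by linarith
    rcases le_or_gt g 5 with hle | hgt
    · -- use C_g ≤ V
      refine (gammaG_le_C g θ).trans ?_
      have hg5 : ((g:ℝ)) ≤ 5 := by exact_mod_cast hle
      rw [div_le_div_iff₀ hd (by norm_num)]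
      nlinarith [mul_nonneg (by linarith : (0:ℝ) ≤ 376 * (g:ℝ) + 44) (by linarith : (0:ℝ) ≤ 251/481 - θ)]
    · -- g ≥ 6, use B_g ≤ V
      have hg6 : (6:ℝ) ≤ (g:ℝ) := by exact_mod_cast hgt
      refine (gammaG_le_B g θ).trans ?_
      rw [div_le_div_iff₀ hd (by norm_num)]
      nlinarith [mul_nonneg (by linarith : (0:ℝ) ≤ 8 * (g:ℝ) - 48) (by linarith : (0:ℝ) ≤ 1 - θ)]
  · -- case (iii)
    intro h1 h2
    have hval : gammaG 5 θ = (120 * θ - 61) / 19 := by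
      unfold gammaG
      push_cast
      norm_num
      rw [min_eq_right (by rw [div_le_div_iff₀ (by norm_num : (0:ℝ) < 19) (by norm_num : (0:ℝ) < 19)]; linarith : (120 * θ - 61) / 19 ≤ (36 * θ - 17) / 19),
        min_eq_right (by rw [div_le_iff₀ (by norm_num : (0:ℝ) < 19)]; linarith)]
    refine ⟨?_, hval⟩
    apply gammaSup_eq_of_max θ 5 (by norm_num)
    intro g hg
    rw [hval]
    have hg' : (1:ℝ) ≤ (g:ℝ) := by exact_mod_cast hg
    have hd : (0:ℝ) < 4 * (g:ℝ) - 1 := by linarith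
    rcases le_or_gt g 5 with hle | hgt
    · refine (gammaG_le_C g θ).trans ?_
      have hg5 : ((g:ℝ)) ≤ 5 := by exact_mod_cast hle
      rw [div_le_div_iff₀ hd (by norm_num)]
      nlinarith [mul_nonneg (by linarith : (0:ℝ) ≤ 120 - 24 * (g:ℝ)) (by linarith : (0:ℝ) ≤ 23/44 - θ)]
    · have hg6 : (6:ℝ) ≤ (g:ℝ) := by exact_mod_cast hgt
      refine (gammaG_le_B g θ).trans ?_
      rw [div_le_div_iff₀ hd (by norm_num)]
      nlinarith [mul_nonneg (by linarith : (0:ℝ) ≤ 328 * (g:ℝ) - 44) (by linarith : (0:ℝ) ≤ θ - 251/481)]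
  · -- case (iv)
    intro h1 h2
    have hval : gammaG 5 θ = 4 * θ - 2 := by
      unfold gammaG
      push_cast
      norm_num
      norm_num at h2
      constructor <;>
        · rw [← sub_le_iff_le_add, le_div_iff₀ (by norm_num : (0:ℝ) < 19)]
          linarith
    refine ⟨?_, hval⟩
    apply gammaSup_eq_of_max θ 5 (by norm_num)
    intro g hg
    rw [hval]
    exact min_le_left _ _
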